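/- arXiv:2412.01086 — 2 statements merged into one kernel-verified Lean document; each statement's English description precedes it below -/
import Mathlib

section
/- Let Z be an n×n matrix whose support graph contains a directed cycle v_0 → v_1 → ... → v_{m-1} → v_0 of length m, with |Z_{v_{l} v_{l+1 mod m}}| ≥ θ > 0 for all l, and such that the cycle's strongly connected component is exactly this directed cycle. Then for every k that is a multiple of m, ‖Z^k‖ ≥ θ^k, where ‖·‖ is the operator norm. -/
noncomputable def opNorm {n : ℕ} (A : Matrix (Fin n) (Fin n) ℂ) : ℝ :=
  ‖Matrix.toEuclideanCLM (𝕜 := ℂ) A‖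

def Reach {V : Type*} (G : V → V → Prop) : V → V → Prop :=
  Relation.ReflTransGen G

def IsSCC {V : Type*} (G : V → V → Prop) (C : Set V) : Prop :=
  ∃ x, C = {u | Reach G x u ∧ Reach G u x}

set_option synthInstance.maxHeartbeats 1000000 in
lemma entry_le_opNorm' {n : ℕ} (A : Matrix (Fin n) (Fin n) ℂ) (i j : Fin n) :
    ‖A i j‖ ≤ ‖Matrix.toEuclideanCLM (𝕜 := ℂ) A‖ := by
  have h1 : Matrix.toEuclideanCLM (𝕜 := ℂ) A (EuclideanSpace.single j (1 : ℂ)) =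
      (WithLp.equiv _ _).symm (A.mulVec (Pi.single j 1)) :=
    Matrix.toEuclideanCLM_toLp A _
  have h2 : (Matrix.toEuclideanCLM (𝕜 := ℂ) A (EuclideanSpace.single j (1 : ℂ))) i = A i j := by
    rw [h1]; simp [Matrix.mulVec_single]
  have h3 : ‖A i j‖ ≤
      ‖Matrix.toEuclideanCLM (𝕜 := ℂ) A (EuclideanSpace.single j (1 : ℂ))‖ := by
    rw [← h2]
    have := norm_inner_le_norm (𝕜 := ℂ)
      (EuclideanSpace.single i (1 : ℂ))
      (Matrix.toEuclideanCLM (𝕜 := ℂ) A (EuclideanSpace.single j (1 : ℂ)))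
    rw [EuclideanSpace.inner_single_left] at this
    simpa using this
  calc ‖A i j‖ ≤ _ := h3
    _ ≤ ‖Matrix.toEuclideanCLM (𝕜 := ℂ) A‖ * ‖EuclideanSpace.single j (1:ℂ)‖ :=
        ContinuousLinearMap.le_opNorm _ _
    _ = ‖Matrix.toEuclideanCLM (𝕜 := ℂ) A‖ := by simp

/-- If the support graph of `Z` contains a simple directed cycle `v 0 → v 1 → ⋯ → v (m-1) → v 0`
whose strongly connected component is exactly this cycle, and all edge weights along the
cycle have modulus at least `θ > 0`, then `‖Z^k‖ ≥ θ^k` for every multiple `k` of `m`. -/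
theorem stmt5 {n m : ℕ} (hm : 0 < m) (Z : Matrix (Fin n) (Fin n) ℂ)
    (v : ZMod m → Fin n) (hv : Function.Injective v)
    (θ : ℝ) (hθ : 0 < θ)
    (hedge : ∀ l : ZMod m, θ ≤ ‖Z (v l) (v (l + 1))‖)
    (hscc : IsSCC (fun i j => Z i j ≠ 0) (Set.range v))
    (honly : ∀ l l' : ZMod m, Z (v l) (v l') ≠ 0 → l' = l + 1) :
    ∀ k : ℕ, m ∣ k → θ ^ k ≤ opNorm (Z ^ k) := by
  have : NeZero m := ⟨hm.ne'⟩
  set G : Fin n → Fin n → Prop := fun i j => Z i j ≠ 0 with hG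
  have hEnz : ∀ l : ZMod m, Z (v l) (v (l + 1)) ≠ 0 := by
    intro l h
    have := hedge l
    rw [h] at this; simp at this; linarith
  have hreach : ∀ l : ZMod m, Reach G (v 0) (v l) := by
    intro l
    have key : ∀ t : ℕ, Reach G (v 0) (v (t : ZMod m)) := by
      intro t
      induction t with
      | zero => simp only [Nat.cast_zero]; exact Relation.ReflTransGen.refl
      | succ t ih =>
        refine ih.tail ?_
        have := hEnz (t : ZMod m)
        have hc : ((t + 1 : ℕ) : ZMod m) = (t : ZMod m) + 1 := by push_cast; ring
        rw [hc]
        exact this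
    have := key l.val
    rwa [ZMod.natCast_zmod_val] at this
  have honcycle : ∀ j : Fin n, Reach G (v 0) j → Reach G j (v 0) → ∃ l, j = v l := by
    intro j h1 h2
    obtain ⟨x, hx⟩ := hscc
    have hv0 : v 0 ∈ Set.range v := ⟨0, rfl⟩
    rw [hx] at hv0
    have hj : j ∈ Set.range v := by
      rw [hx]
      exact ⟨hv0.1.trans h1, h2.trans hv0.2⟩
    obtain ⟨l, hl⟩ := hj
    exact ⟨l, hl.symm⟩
  have main : ∀ t : ℕ, ∀ j : Fin n, Reach G j (v 0) →
      (Z ^ t) (v 0) j = if j = v (t : ZMod m) then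
        ∏ i ∈ Finset.range t, Z (v (i : ZMod m)) (v ((i : ZMod m) + 1)) else 0 := by
    intro t
    induction t with
    | zero =>
      intro j _
      simp [Matrix.one_apply, eq_comm]
    | succ t ih =>
      intro j hj
      rw [pow_succ, Matrix.mul_apply]
      have hcast : ((t + 1 : ℕ) : ZMod m) = (t : ZMod m) + 1 := by push_cast; ring
      have hsum_eq : ∑ x, (Z ^ t) (v 0) x * Z x j
          = (Z ^ t) (v 0) (v (t : ZMod m)) * Z (v (t : ZMod m)) j := by
        refine Finset.sum_eq_single _ (fun x _ hne => ?_) (fun h => absurd (Finset.mem_univ _) h)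
        by_contra hx
        have hZ : Z x j ≠ 0 := fun h => hx (by rw [h, mul_zero])
        have hxr : Reach G x (v 0) := (Relation.ReflTransGen.single (show G x j from hZ)).trans hj
        rw [ih x hxr, if_neg hne, zero_mul] at hx
        exact hx rfl
      rw [hsum_eq]
      by_cases hZj : Z (v (t : ZMod m)) j = 0
      · rw [hZj, mul_zero, if_neg]
        intro hjv
        rw [hjv, hcast] at hZj
        exact hEnz _ hZj
      · have hjr : Reach G (v (t : ZMod m)) (v 0) :=
          (Relation.ReflTransGen.single (show G (v (t : ZMod m)) j from hZj)).trans hj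
        have hv0j : Reach G (v 0) j := (hreach (t : ZMod m)).tail hZj
        obtain ⟨l', hl'⟩ := honcycle j hv0j hj
        have hle : l' = (t : ZMod m) + 1 := honly _ _ (hl' ▸ hZj)
        have hjeq : j = v ((t + 1 : ℕ) : ZMod m) := by rw [hcast, ← hle, hl']
        rw [ih _ hjr, if_pos rfl, if_pos hjeq, Finset.prod_range_succ, hjeq, hcast]
  intro k hk
  have hk0 : ((k : ℕ) : ZMod m) = 0 := (ZMod.natCast_eq_zero_iff k m).mpr hk
  have hentry := main k (v 0) Relation.ReflTransGen.refl
  rw [hk0, if_pos rfl] at hentry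
  have habs : θ ^ k ≤ ‖(Z ^ k) (v 0) (v 0)‖ := by
    rw [hentry, norm_prod]
    calc θ ^ k = ∏ _i ∈ Finset.range k, θ := by rw [Finset.prod_const, Finset.card_range]
      _ ≤ _ := Finset.prod_le_prod (fun _ _ => hθ.le) (fun i _ => hedge _)
  exact habs.trans (entry_le_opNorm' _ _ _)
end

section
/- For an n×n matrix A (n > 2) with ρ(A) ≠ 0 and any k ≥ 1, ρ(A) ≥ C_n^{−σ_n(k)/k} (‖A‖^n/‖A^n‖)^{−ν_n(k)/k} ‖A^k‖^{1/k}, where C_n = n^{3n/2}, σ_n(k) = ((n−1)³/(n−2)²) k^{log(n−1)/log n}, ν_n(k) = ((n−1)²/(n−2)) k^{log(n−1)/log n}. -/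
noncomputable def specRad {n : ℕ} (A : Matrix (Fin n) (Fin n) ℂ) : ℝ :=
  sSup {x : ℝ | ∃ μ : ℂ, (Matrix.charpoly A).IsRoot μ ∧ x = ‖μ‖}

/-- `σ_n(k) = ((n−1)³/(n−2)²) k^{log(n−1)/log n}`. -/
noncomputable def sigmaN (n k : ℕ) : ℝ :=
  (((n : ℝ) - 1) ^ 3 / ((n : ℝ) - 2) ^ 2) *
    (k : ℝ) ^ (Real.log ((n : ℝ) - 1) / Real.log (n : ℝ))

/-- `ν_n(k) = ((n−1)²/(n−2)) k^{log(n−1)/log n}`. -/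
noncomputable def nuN (n k : ℕ) : ℝ :=
  (((n : ℝ) - 1) ^ 2 / ((n : ℝ) - 2)) *
    (k : ℝ) ^ (Real.log ((n : ℝ) - 1) / Real.log (n : ℝ))

open Polynomial Matrix

section Aux

lemma kz_det_flip {n : ℕ} {M N : Matrix (Fin n) (Fin n) ℂ} (h : Matrix.det (M - N) = 0) :
    Matrix.det (N - M) = 0 := by
  rw [← neg_sub, Matrix.det_neg, h, mul_zero]

lemma kz_eval_cp {n : ℕ} (A : Matrix (Fin n) (Fin n) ℂ) (μ : ℂ) :
    (Matrix.charpoly A).eval μ = Matrix.det (algebraMap ℂ (Matrix (Fin n) (Fin n) ℂ) μ - A) := by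
  rw [Matrix.charpoly, ← Polynomial.coe_evalRingHom, RingHom.map_det]
  congr 1
  ext i j
  by_cases h : i = j <;>
    simp [Matrix.charmatrix_apply, h, Matrix.algebraMap_matrix_apply, Matrix.one_apply,
      Matrix.diagonal_apply, Matrix.scalar_apply]

lemma kz_aeval_pow_sub {n : ℕ} (A : Matrix (Fin n) (Fin n) ℂ) (c : ℂ) (m : ℕ) :
    Polynomial.aeval A (X ^ m - C c) = A ^ m - algebraMap ℂ (Matrix (Fin n) (Fin n) ℂ) c := by
  rw [map_sub, map_pow, aeval_X, aeval_C]

lemma kz_root_pow {n : ℕ} (A : Matrix (Fin n) (Fin n) ℂ) (μ : ℂ)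
    (h : (Matrix.charpoly A).IsRoot μ) (m : ℕ) :
    (Matrix.charpoly (A ^ m)).IsRoot (μ ^ m) := by
  rw [Polynomial.IsRoot, kz_eval_cp] at h ⊢
  obtain ⟨q, hq⟩ : (X - C μ) ∣ (X ^ m - C (μ ^ m)) := by
    apply Polynomial.dvd_iff_isRoot.mpr
    simp [Polynomial.IsRoot]
  apply kz_det_flip
  rw [← kz_aeval_pow_sub, hq, _root_.map_mul, Matrix.det_mul]
  have h2 : Polynomial.aeval A (X - C μ) = A - algebraMap ℂ _ μ := by
    rw [map_sub, aeval_X, aeval_C]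
  rw [h2, kz_det_flip h, zero_mul]

lemma kz_root_of_pow {n : ℕ} (A : Matrix (Fin n) (Fin n) ℂ) (lam : ℂ) (m : ℕ) (hm : 1 ≤ m)
    (h : (Matrix.charpoly (A ^ m)).IsRoot lam) :
    ∃ μ : ℂ, (Matrix.charpoly A).IsRoot μ ∧ μ ^ m = lam := by
  rw [Polynomial.IsRoot, kz_eval_cp] at h
  set p : ℂ[X] := X ^ m - C lam with hp
  have hmonic : p.Monic := Polynomial.monic_X_pow_sub_C _ (by omega)
  have hprod : p = (p.roots.map fun a => X - C a).prod :=
    (IsAlgClosed.splits p).eq_prod_roots_of_monic hmonic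
  have hdet0 : Matrix.det (Polynomial.aeval A p) = 0 := by
    rw [hp, kz_aeval_pow_sub]; exact kz_det_flip h
  rw [hprod, ← Multiset.prod_toList, map_list_prod] at hdet0
  have det_list : ∀ l : List (Matrix (Fin n) (Fin n) ℂ),
      (l.prod).det = (l.map Matrix.det).prod := by
    intro l
    induction l with
    | nil => simp
    | cons a t ih => simp [Matrix.det_mul, ih]
  rw [det_list, List.prod_eq_zero_iff] at hdet0
  simp only [List.mem_map, Multiset.mem_toList, Multiset.mem_map] at hdet0
  obtain ⟨x, ⟨q, ⟨μ, hμmem, rfl⟩, rfl⟩, hMdet⟩ := hdet0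
  refine ⟨μ, ?_, ?_⟩
  · rw [Polynomial.IsRoot, kz_eval_cp]
    apply kz_det_flip
    have : Polynomial.aeval A (X - C μ) = A - algebraMap ℂ _ μ := by
      rw [map_sub, aeval_X, aeval_C]
    rw [← this]
    simpa using hMdet
  · have := Polynomial.isRoot_of_mem_roots hμmem
    rw [hp] at this
    simpa [Polynomial.IsRoot, sub_eq_zero] using this

lemma kz_root_abs_le {n : ℕ} [NeZero n] (A : Matrix (Fin n) (Fin n) ℂ) (μ : ℂ)
    (h : (Matrix.charpoly A).IsRoot μ) : ‖μ‖ ≤ opNorm A := by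
  have h1 : μ ∈ spectrum ℂ A := by
    rw [spectrum.mem_iff]
    intro hU
    rw [Matrix.isUnit_iff_isUnit_det] at hU
    rw [Polynomial.IsRoot, kz_eval_cp] at h
    rw [h] at hU
    exact hU.ne_zero rfl |>.elim
  have h2 : μ ∈ spectrum ℂ (Matrix.toEuclideanCLM (𝕜 := ℂ) A) := by
    rwa [AlgEquiv.spectrum_eq]
  exact spectrum.norm_le_norm_of_mem h2

section SR
variable {n : ℕ} [NeZero n] (A : Matrix (Fin n) (Fin n) ℂ)

lemma kz_sr_bdd :
    BddAbove {x : ℝ | ∃ μ : ℂ, (Matrix.charpoly A).IsRoot μ ∧ x = ‖μ‖} :=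
  ⟨opNorm A, by rintro x ⟨μ, hμ, rfl⟩; exact kz_root_abs_le A μ hμ⟩

lemma kz_sr_ne :
    {x : ℝ | ∃ μ : ℂ, (Matrix.charpoly A).IsRoot μ ∧ x = ‖μ‖}.Nonempty := by
  have hd : 0 < (Matrix.charpoly A).degree := by
    rw [Polynomial.natDegree_pos_iff_degree_pos.symm, Matrix.charpoly_natDegree_eq_dim]
    simpa [Fintype.card_fin] using Nat.pos_of_ne_zero (NeZero.ne n)
  obtain ⟨μ, hμ⟩ := Complex.exists_root hd
  exact ⟨‖μ‖, μ, hμ, rfl⟩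

lemma kz_abs_root_le_specRad {μ : ℂ} (h : (Matrix.charpoly A).IsRoot μ) :
    ‖μ‖ ≤ specRad A :=
  le_csSup (kz_sr_bdd A) ⟨μ, h, rfl⟩

lemma kz_specRad_nonneg : 0 ≤ specRad A := by
  obtain ⟨x, μ, hμ, rfl⟩ := kz_sr_ne A
  exact (norm_nonneg μ).trans (kz_abs_root_le_specRad A hμ)

lemma kz_specRad_le_bound {y : ℝ}
    (h : ∀ μ : ℂ, (Matrix.charpoly A).IsRoot μ → ‖μ‖ ≤ y) : specRad A ≤ y :=
  csSup_le (kz_sr_ne A) (by rintro x ⟨μ, hμ, rfl⟩; exact h μ hμ)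

lemma kz_opNorm_one : opNorm (1 : Matrix (Fin n) (Fin n) ℂ) = 1 := by
  have : Nontrivial (EuclideanSpace ℂ (Fin n)) := inferInstance
  rw [opNorm, _root_.map_one, norm_one]

lemma kz_opNorm_mul_le (B : Matrix (Fin n) (Fin n) ℂ) :
    opNorm (A * B) ≤ opNorm A * opNorm B := by
  rw [opNorm, _root_.map_mul]; exact norm_mul_le _ _

lemma kz_opNorm_pow_le (m : ℕ) : opNorm (A ^ m) ≤ opNorm A ^ m := by
  induction m with
  | zero => simp [kz_opNorm_one]
  | succ m ih =>
    rw [pow_succ, pow_succ]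
    exact (kz_opNorm_mul_le _ _).trans (mul_le_mul_of_nonneg_right ih (norm_nonneg _))

lemma kz_specRad_pow_le (m : ℕ) (hm : 1 ≤ m) : specRad A ^ m ≤ opNorm (A ^ m) := by
  have h0 : (0:ℝ) ≤ opNorm (A ^ m) := norm_nonneg _
  set y : ℝ := opNorm (A ^ m) ^ ((1:ℝ)/m) with hy
  have hy0 : 0 ≤ y := Real.rpow_nonneg h0 _
  have hym : y ^ m = opNorm (A ^ m) := by
    rw [hy, ← Real.rpow_natCast (opNorm (A ^ m) ^ ((1:ℝ)/m)) m, ← Real.rpow_mul h0,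
      one_div, inv_mul_cancel₀ (Nat.cast_ne_zero.mpr (by omega)), Real.rpow_one]
  have hroots : ∀ μ : ℂ, (Matrix.charpoly A).IsRoot μ → ‖μ‖ ≤ y := by
    intro μ h
    have h2 := kz_root_abs_le (A ^ m) (μ ^ m) (kz_root_pow A μ h m)
    rw [norm_pow, ← hym] at h2
    exact (pow_le_pow_iff_left₀ (norm_nonneg μ) hy0 (by omega)).mp h2
  calc specRad A ^ m ≤ y ^ m :=
      pow_le_pow_left₀ (kz_specRad_nonneg A) (kz_specRad_le_bound A hroots) m
    _ = opNorm (A ^ m) := hym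

end SR

lemma kz_abs_prod_le (r : ℝ) (hr : 0 ≤ r) :
    ∀ u : Multiset ℂ, (∀ z ∈ u, ‖z‖ ≤ r) →
      ‖u.prod‖ ≤ r ^ (Multiset.card u) := by
  intro u
  induction u using Multiset.induction_on with
  | empty => simp
  | cons a t ih =>
    intro h
    rw [Multiset.prod_cons, norm_mul, Multiset.card_cons, pow_succ r,
      mul_comm (r ^ _) r]
    exact mul_le_mul (h a (Multiset.mem_cons_self a t))
      (ih fun z hz => h z (Multiset.mem_cons_of_mem hz)) (norm_nonneg _) hr

lemma kz_abs_esymm_le (s : Multiset ℂ) (j : ℕ) (r : ℝ) (hr : 0 ≤ r)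
    (h : ∀ z ∈ s, ‖z‖ ≤ r) :
    ‖s.esymm j‖ ≤ ((Multiset.card s).choose j : ℝ) * r ^ j := by
  rw [Multiset.esymm]
  calc ‖(Multiset.map Multiset.prod (Multiset.powersetCard j s)).sum‖
      ≤ ((Multiset.map (fun u => ‖u.prod‖) (Multiset.powersetCard j s))).sum := by
        simpa [Multiset.map_map] using
          (norm_multiset_sum_le (Multiset.map Multiset.prod (Multiset.powersetCard j s)) :
            ‖(Multiset.map Multiset.prod (Multiset.powersetCard j s)).sum‖ ≤ _)
    _ ≤ ((Multiset.card s).choose j : ℝ) * r ^ j := by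
        have hb : ∀ x ∈ Multiset.map (fun u => ‖u.prod‖)
            (Multiset.powersetCard j s), x ≤ r ^ j := by
          rintro x hx
          rw [Multiset.mem_map] at hx
          obtain ⟨u, hu, rfl⟩ := hx
          rw [Multiset.mem_powersetCard] at hu
          have := kz_abs_prod_le r hr u (fun z hz => h z (Multiset.mem_of_le hu.1 hz))
          rwa [hu.2] at this
        calc _ ≤ (Multiset.card (Multiset.map (fun u => ‖u.prod‖)
              (Multiset.powersetCard j s))) • (r ^ j) := Multiset.sum_le_card_nsmul _ _ hb
          _ = _ := by
              rw [Multiset.card_map, Multiset.card_powersetCard, nsmul_eq_mul]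

lemma kz_charpoly_coeff_abs_le {n : ℕ} (B : Matrix (Fin n) (Fin n) ℂ) (r : ℝ) (hr : 0 ≤ r)
    (hroots : ∀ μ : ℂ, (Matrix.charpoly B).IsRoot μ → ‖μ‖ ≤ r)
    (i : ℕ) (hi : i ≤ n) :
    ‖(Matrix.charpoly B).coeff i‖ ≤ (n.choose (n - i) : ℝ) * r ^ (n - i) := by
  set p := Matrix.charpoly B with hp
  have hdeg : p.natDegree = n := by
    rw [hp, Matrix.charpoly_natDegree_eq_dim, Fintype.card_fin]
  have hcard : Multiset.card p.roots = p.natDegree :=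
    Polynomial.splits_iff_card_roots.mp (IsAlgClosed.splits p)
  have hco := Polynomial.coeff_eq_esymm_roots_of_card hcard (k := i) (by omega)
  rw [(Matrix.charpoly_monic B).leadingCoeff, one_mul, hdeg] at hco
  rw [hco, norm_mul, norm_pow, norm_neg, norm_one, one_pow, one_mul]
  have hz : ∀ z ∈ p.roots, ‖z‖ ≤ r := fun z hz =>
    hroots z (Polynomial.isRoot_of_mem_roots hz)
  have := kz_abs_esymm_le p.roots (n - i) r hr hz
  rwa [hcard, hdeg] at this

lemma kz_pow_card_eq_sum {n : ℕ} (B : Matrix (Fin n) (Fin n) ℂ) :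
    B ^ n = ∑ i ∈ Finset.range n, (-(Matrix.charpoly B).coeff i) • B ^ i := by
  have hdeg : (Matrix.charpoly B).natDegree = n := by
    rw [Matrix.charpoly_natDegree_eq_dim, Fintype.card_fin]
  have has := (Matrix.charpoly_monic B).as_sum
  have h0 := Matrix.aeval_self_charpoly B
  rw [has, map_add, map_pow, aeval_X, map_sum] at h0
  have hterm : ∀ i, Polynomial.aeval B (C ((Matrix.charpoly B).coeff i) * X ^ i)
      = ((Matrix.charpoly B).coeff i) • B ^ i := by
    intro i
    rw [_root_.map_mul, aeval_C, map_pow, aeval_X, ← Algebra.smul_def]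
  simp_rw [hterm, hdeg] at h0
  have := eq_neg_of_add_eq_zero_left h0
  rw [this, ← Finset.sum_neg_distrib]
  exact Finset.sum_congr rfl fun i _ => (neg_smul _ _).symm

lemma kz_sum_choose_le {n : ℕ} (hn : 2 ≤ n) :
    (∑ i ∈ Finset.range n, n.choose (n - i)) ≤ n * 2 ^ (n - 1) := by
  have h1 : ∑ i ∈ Finset.range n, n.choose (n - i)
      = ∑ j ∈ Finset.range n, n.choose (j + 1) := by
    rw [← Finset.sum_range_reflect (fun j => n.choose (j + 1)) n]
    apply Finset.sum_congr rfl
    intro i hi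
    rw [Finset.mem_range] at hi
    congr 1
    omega
  have h2 : ∑ j ∈ Finset.range n, n.choose (j + 1)
      ≤ ∑ j ∈ Finset.range (n + 1), n.choose j := by
    rw [Finset.sum_range_succ' (fun j => n.choose j) n]
    exact Nat.le_add_right _ _
  rw [Nat.sum_range_choose] at h2
  have h3 : 2 ^ n ≤ n * 2 ^ (n - 1) := by
    have e : n - 1 + 1 = n := by omega
    calc 2 ^ n = 2 ^ (n - 1) * 2 := by rw [← pow_succ, e]
      _ ≤ 2 ^ (n - 1) * n := Nat.mul_le_mul_left _ hn
      _ = n * 2 ^ (n - 1) := Nat.mul_comm _ _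
  omega

lemma kz_opNorm_smul {n : ℕ} [NeZero n] (c : ℂ) (M : Matrix (Fin n) (Fin n) ℂ) :
    ‖Matrix.toEuclideanCLM (𝕜 := ℂ) (c • M)‖ ≤ ‖c‖ * opNorm M := by
  haveI : Nontrivial (EuclideanSpace ℂ (Fin n)) := inferInstance
  rw [Algebra.smul_def, _root_.map_mul]
  refine (norm_mul_le _ _).trans ?_
  refine mul_le_mul_of_nonneg_right ?_ (norm_nonneg _)
  rw [AlgHomClass.commutes (Matrix.toEuclideanCLM (𝕜 := ℂ)) c, Algebra.algebraMap_eq_smul_one,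
    norm_smul, norm_one, mul_one]

lemma kz_key {n : ℕ} [NeZero n] (hn : 2 ≤ n) (A : Matrix (Fin n) (Fin n) ℂ)
    (m : ℕ) (hm : 1 ≤ m) :
    opNorm (A ^ (m * n)) ≤ ((n : ℝ) * 2 ^ (n - 1)) * specRad A ^ m
      * opNorm (A ^ m) ^ (n - 1) := by
  set r := specRad A with hrdef
  set B := A ^ m with hB
  set a := opNorm B with ha
  have hr0 : 0 ≤ r := kz_specRad_nonneg A
  have hrm : r ^ m ≤ a := kz_specRad_pow_le A m hm
  have ha0 : 0 ≤ a := norm_nonneg _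
  have hroots : ∀ μ : ℂ, (Matrix.charpoly B).IsRoot μ → ‖μ‖ ≤ r ^ m := by
    intro μ h
    obtain ⟨ν, hν, rfl⟩ := kz_root_of_pow A μ m hm h
    rw [norm_pow]
    exact pow_le_pow_left₀ (norm_nonneg ν) (kz_abs_root_le_specRad A hν) m
  have hnorm : opNorm (B ^ n) ≤ ∑ i ∈ Finset.range n,
      ‖(Matrix.charpoly B).coeff i‖ * opNorm (B ^ i) := by
    rw [opNorm, kz_pow_card_eq_sum B, map_sum]
    refine (norm_sum_le _ _).trans (Finset.sum_le_sum fun i _ => ?_)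
    have hsm := kz_opNorm_smul (-(Matrix.charpoly B).coeff i) (B ^ i)
    rwa [norm_neg] at hsm
  have hterm : ∀ i ∈ Finset.range n,
      ‖(Matrix.charpoly B).coeff i‖ * opNorm (B ^ i)
      ≤ (n.choose (n - i) : ℝ) * (r ^ m * a ^ (n - 1)) := by
    intro i hi
    rw [Finset.mem_range] at hi
    have h1 := kz_charpoly_coeff_abs_le B (r ^ m) (pow_nonneg hr0 m) hroots i (by omega)
    have h2 : opNorm (B ^ i) ≤ a ^ i := kz_opNorm_pow_le B i
    have h3 : (r ^ m) ^ (n - i) * a ^ i ≤ r ^ m * a ^ (n - 1) := by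
      have e : n - i = (n - 1 - i) + 1 := by omega
      have h4 : (r ^ m) ^ (n - 1 - i) ≤ a ^ (n - 1 - i) :=
        pow_le_pow_left₀ (pow_nonneg hr0 m) hrm _
      have e2 : a ^ (n - 1 - i) * a ^ i = a ^ (n - 1) := by
        rw [← pow_add]; congr 1; omega
      calc (r ^ m) ^ (n - i) * a ^ i = r ^ m * ((r ^ m) ^ (n - 1 - i) * a ^ i) := by
            rw [e, pow_succ]; ring
        _ ≤ r ^ m * (a ^ (n - 1 - i) * a ^ i) := by
            have : (r ^ m) ^ (n - 1 - i) * a ^ i ≤ a ^ (n - 1 - i) * a ^ i :=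
              mul_le_mul_of_nonneg_right h4 (pow_nonneg ha0 _)
            exact mul_le_mul_of_nonneg_left this (pow_nonneg hr0 m)
        _ = r ^ m * a ^ (n - 1) := by rw [e2]
    calc ‖(Matrix.charpoly B).coeff i‖ * opNorm (B ^ i)
        ≤ ((n.choose (n - i) : ℝ) * (r ^ m) ^ (n - i)) * a ^ i :=
          mul_le_mul h1 h2 (norm_nonneg _) (by positivity)
      _ = (n.choose (n - i) : ℝ) * ((r ^ m) ^ (n - i) * a ^ i) := by ring
      _ ≤ (n.choose (n - i) : ℝ) * (r ^ m * a ^ (n - 1)) :=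
          mul_le_mul_of_nonneg_left h3 (Nat.cast_nonneg _)
  calc opNorm (A ^ (m * n)) = opNorm (B ^ n) := by rw [hB, ← pow_mul]
    _ ≤ ∑ i ∈ Finset.range n,
        ‖(Matrix.charpoly B).coeff i‖ * opNorm (B ^ i) := hnorm
    _ ≤ ∑ i ∈ Finset.range n, (n.choose (n - i) : ℝ) * (r ^ m * a ^ (n - 1)) :=
        Finset.sum_le_sum hterm
    _ = ((∑ i ∈ Finset.range n, n.choose (n - i) : ℕ) : ℝ) * (r ^ m * a ^ (n - 1)) := by
        rw [← Finset.sum_mul, Nat.cast_sum]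
    _ ≤ ((n * 2 ^ (n - 1) : ℕ) : ℝ) * (r ^ m * a ^ (n - 1)) := by
        have := kz_sum_choose_le hn
        exact mul_le_mul_of_nonneg_right (by exact_mod_cast this) (by positivity)
    _ = ((n : ℝ) * 2 ^ (n - 1)) * r ^ m * a ^ (n - 1) := by push_cast; ring

def fg (n : ℕ) (k : ℕ) : ℕ × ℕ :=
  if h : k < n ∨ n ≤ 1 then (k, k) else
    have : k / n < k := Nat.div_lt_self (by omega) (by omega)
    let p := fg n (k / n)
    (1 + k % n + (n - 1) * p.1, k % n + (n - 1) * p.2)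
termination_by k

lemma fg_small {n k : ℕ} (h : k < n) : fg n k = (k, k) := by
  rw [fg, dif_pos (Or.inl h)]

lemma fg_step {n k : ℕ} (h1 : n ≤ k) (h2 : 2 ≤ n) :
    fg n k = (1 + k % n + (n - 1) * (fg n (k / n)).1,
      k % n + (n - 1) * (fg n (k / n)).2) := by
  rw [fg, dif_neg (by omega)]

lemma fg_bound {n : ℕ} (hn : 2 < n) : ∀ k, 1 ≤ k →
    (n - 2) * (fg n k).2 + (n - 1) ≤ (n - 1) ^ (Nat.log n k + 2) ∧
    (n - 2) * (fg n k).1 + n ≤ (n - 1) ^ (Nat.log n k + 2) + (n - 1) ^ (Nat.log n k + 1) := by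
  intro k
  induction k using Nat.strong_induction_on with
  | _ k ih =>
    intro hk1
    obtain ⟨m, rfl⟩ : ∃ m, n = m + 3 := ⟨n - 3, by omega⟩
    have e1 : m + 3 - 1 = m + 2 := by omega
    have e2 : m + 3 - 2 = m + 1 := by omega
    by_cases hsm : k < m + 3
    · rw [fg_small hsm, Nat.log_eq_zero_iff.mpr (Or.inl hsm), e1, e2]
      have hk2 : k ≤ m + 2 := by omega
      have hmul : (m + 1) * k ≤ (m + 1) * (m + 2) := Nat.mul_le_mul_left _ hk2
      constructor
      · dsimp only; norm_num; nlinarith [hmul]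
      · dsimp only; norm_num; nlinarith [hmul]
    · push_neg at hsm
      have hq1 : 1 ≤ k / (m + 3) := (Nat.one_le_div_iff (by omega)).mpr hsm
      have hqk : k / (m + 3) < k := Nat.div_lt_self (by omega) (by omega)
      obtain ⟨hG, hF⟩ := ih (k / (m + 3)) hqk hq1
      rw [fg_step hsm (by omega), e1, e2] at *
      set J := Nat.log (m + 3) k with hJdef
      set Jq := Nat.log (m + 3) (k / (m + 3)) with hJqdef
      have hJ : Jq + 1 ≤ J := by
        have h1 : (m + 3) ^ Jq ≤ k / (m + 3) :=
          Nat.pow_log_le_self (m + 3) (by omega)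
        have h2 : (m + 3) ^ (Jq + 1) ≤ k := by
          calc (m + 3) ^ (Jq + 1) = (m + 3) ^ Jq * (m + 3) := pow_succ _ _
            _ ≤ (k / (m + 3)) * (m + 3) := by exact Nat.mul_le_mul_right _ h1
            _ ≤ k := Nat.div_mul_le_self _ _
        exact Nat.le_log_of_pow_le (by omega) h2
      have hdlt0 : k % (m + 3) < m + 3 := Nat.mod_lt k (by omega)
      set d := k % (m + 3) with hd
      have hdlt : d ≤ m + 2 := by omega
      set fq := (fg (m + 3) (k / (m + 3))).1
      set gq := (fg (m + 3) (k / (m + 3))).2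
      have hpow : (m + 2) ^ (Jq + 3) ≤ (m + 2) ^ (J + 2) ∧
          (m + 2) ^ (Jq + 2) ≤ (m + 2) ^ (J + 1) := by
        constructor <;> exact Nat.pow_le_pow_right (by omega) (by omega)
      constructor
      · calc (m + 1) * (d + (m + 2) * gq) + (m + 2)
            ≤ (m + 2) * ((m + 1) * gq + (m + 2)) := by nlinarith [hdlt]
          _ ≤ (m + 2) * (m + 2) ^ (Jq + 2) := Nat.mul_le_mul_left _ hG
          _ = (m + 2) ^ (Jq + 3) := by ring
          _ ≤ (m + 2) ^ (J + 2) := hpow.1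
      · calc (m + 1) * (1 + d + (m + 2) * fq) + (m + 3)
            ≤ (m + 2) * ((m + 1) * fq + (m + 3)) := by nlinarith [hdlt]
          _ ≤ (m + 2) * ((m + 2) ^ (Jq + 2) + (m + 2) ^ (Jq + 1)) := Nat.mul_le_mul_left _ hF
          _ = (m + 2) ^ (Jq + 3) + (m + 2) ^ (Jq + 2) := by ring
          _ ≤ (m + 2) ^ (J + 2) + (m + 2) ^ (J + 1) := Nat.add_le_add hpow.1 hpow.2

lemma kz_master {n : ℕ} (hn : 2 < n) (A : Matrix (Fin n) (Fin n) ℂ)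
    (hr : 0 < specRad A) : ∀ k, 1 ≤ k →
    opNorm (A ^ k) ≤ ((n : ℝ) * 2 ^ (n - 1)) ^ (fg n k).1 *
      (opNorm A ^ n / opNorm (A ^ n)) ^ (fg n k).2 * specRad A ^ k := by
  haveI : NeZero n := ⟨by omega⟩
  set r := specRad A with hrdef
  set D := ((n : ℝ) * 2 ^ (n - 1)) with hD
  set R := opNorm A ^ n / opNorm (A ^ n) with hR
  have hAn0 : 0 < opNorm (A ^ n) :=
    lt_of_lt_of_le (pow_pos hr n) (kz_specRad_pow_le A n (by omega))
  have hR1 : 1 ≤ R := (one_le_div hAn0).mpr (kz_opNorm_pow_le A n)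
  have hR0 : 0 < R := lt_of_lt_of_le one_pos hR1
  have hD1 : 1 ≤ D := by
    rw [hD]
    have h1 : (1:ℝ) ≤ (n : ℝ) := by exact_mod_cast (by omega : 1 ≤ n)
    have h2 : (1:ℝ) ≤ 2 ^ (n - 1) := one_le_pow₀ one_le_two
    nlinarith
  have hD0 : 0 < D := lt_of_lt_of_le one_pos hD1
  have base : opNorm A ≤ D * R * r := by
    have hkey := kz_key (by omega) A 1 le_rfl
    rw [one_mul, pow_one, pow_one] at hkey
    have e : n - 1 + 1 = n := by omega
    have hpow_split : ∀ x : ℝ, x ^ (n - 1) * x = x ^ n := by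
      intro x
      conv_rhs => rw [← e]
      rw [pow_succ]
    have h2 : opNorm A * (D * r * opNorm A ^ (n - 1)) = D * r * opNorm A ^ n := by
      rw [← hpow_split (opNorm A)]; ring
    have h3 : opNorm A ^ n = R * opNorm (A ^ n) := (div_mul_cancel₀ _ hAn0.ne').symm
    have hmul : opNorm A * opNorm (A ^ n) ≤ (D * R * r) * opNorm (A ^ n) := by
      calc opNorm A * opNorm (A ^ n)
          ≤ opNorm A * (D * r * opNorm A ^ (n - 1)) :=
            mul_le_mul_of_nonneg_left hkey (norm_nonneg _)
        _ = D * r * opNorm A ^ n := h2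
        _ = (D * R * r) * opNorm (A ^ n) := by rw [h3]; ring
    exact le_of_mul_le_mul_right (by rw [mul_comm (opNorm A)] at hmul ⊢; exact hmul) hAn0
  intro k
  induction k using Nat.strong_induction_on with
  | _ k ih =>
    intro hk1
    by_cases hsm : k < n
    · rw [fg_small hsm]
      dsimp only
      calc opNorm (A ^ k) ≤ opNorm A ^ k := kz_opNorm_pow_le A k
        _ ≤ (D * R * r) ^ k := pow_le_pow_left₀ (norm_nonneg _) base k
        _ = D ^ k * R ^ k * r ^ k := by rw [mul_pow, mul_pow]
    · push_neg at hsm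
      have hq1 : 1 ≤ k / n := (Nat.one_le_div_iff (by omega)).mpr hsm
      have hqk : k / n < k := Nat.div_lt_self (by omega) (by omega)
      have hkey := kz_key (le_of_lt hn) A (k / n) hq1
      have ihq := ih (k / n) hqk hq1
      rw [fg_step hsm (by omega)]
      dsimp only
      set q := k / n with hq
      set d := k % n with hd
      set f := (fg n q).1 with hf
      set g := (fg n q).2 with hg
      have hk : q * n + d = k := by
        rw [Nat.mul_comm q n]
        exact Nat.div_add_mod k n
      have hAd : opNorm (A ^ d) ≤ (D * R * r) ^ d :=
        (kz_opNorm_pow_le A d).trans (pow_le_pow_left₀ (norm_nonneg _) base d)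
      obtain ⟨e, he⟩ : ∃ e, n = e + 1 := ⟨n - 1, by omega⟩
      have he1 : n - 1 = e := by omega
      calc opNorm (A ^ k) = opNorm (A ^ (q * n) * A ^ d) := by
            conv_lhs => rw [← hk]
            rw [pow_add]
        _ ≤ opNorm (A ^ (q * n)) * opNorm (A ^ d) := kz_opNorm_mul_le _ _
        _ ≤ (D * r ^ q * opNorm (A ^ q) ^ (n - 1)) * ((D * R * r) ^ d) :=
            mul_le_mul hkey hAd (norm_nonneg _)
              (mul_nonneg (mul_nonneg hD0.le (pow_nonneg hr.le q))
                (pow_nonneg (norm_nonneg _) _))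
        _ ≤ (D * r ^ q * (D ^ f * R ^ g * r ^ q) ^ (n - 1)) * ((D * R * r) ^ d) := by
            refine mul_le_mul_of_nonneg_right (mul_le_mul_of_nonneg_left
              (pow_le_pow_left₀ (norm_nonneg _) ihq (n - 1))
              (mul_nonneg hD0.le (pow_nonneg hr.le q)))
              (pow_nonneg (mul_nonneg (mul_nonneg hD0.le hR0.le) hr.le) d)
        _ = D ^ (1 + d + (n - 1) * f) * R ^ (d + (n - 1) * g) * r ^ k := by
            rw [← hk, he1, he]
            ring
lemma kz_pow_log_le {n k : ℕ} (hn : 2 < n) (hk : 1 ≤ k) :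
    ((n : ℝ) - 1) ^ (Nat.log n k) ≤ (k : ℝ) ^ (Real.log ((n : ℝ) - 1) / Real.log (n : ℝ)) := by
  set α := Real.log ((n : ℝ) - 1) / Real.log (n : ℝ) with hα
  have hn1 : (1:ℝ) < (n:ℝ) := by exact_mod_cast (by omega : 1 < n)
  have hlogn : 0 < Real.log n := Real.log_pos hn1
  have hc1 : (0:ℝ) < (n:ℝ) - 1 := by linarith
  have hn0 : (0:ℝ) ≤ (n:ℝ) := by linarith
  have hn2 : (2:ℝ) < (n:ℝ) := by exact_mod_cast hn
  have hα0 : 0 ≤ α := div_nonneg (Real.log_nonneg (by linarith)) hlogn.le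
  have hbase : (n:ℝ) ^ α = (n:ℝ) - 1 := by
    rw [hα, Real.rpow_def_of_pos (by linarith : (0:ℝ) < (n:ℝ))]
    rw [mul_comm (Real.log (n:ℝ)) _, div_mul_cancel₀ _ hlogn.ne']
    exact Real.exp_log hc1
  have h1 : ((n:ℝ) - 1) ^ (Nat.log n k) = ((n:ℝ) ^ ((Nat.log n k : ℕ) : ℝ)) ^ α := by
    rw [← hbase, ← Real.rpow_natCast ((n:ℝ) ^ α) (Nat.log n k), ← Real.rpow_mul hn0,
      mul_comm α ((Nat.log n k : ℕ) : ℝ), Real.rpow_mul hn0]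
  have h2 : (n:ℝ) ^ ((Nat.log n k : ℕ) : ℝ) ≤ (k:ℝ) := by
    rw [Real.rpow_natCast]
    exact_mod_cast Nat.pow_log_le_self n (by omega : k ≠ 0)
  rw [h1]
  exact Real.rpow_le_rpow (by positivity) h2 hα0

lemma kz_fg_le_real {n : ℕ} (hn : 2 < n) (k : ℕ) (hk : 1 ≤ k) :
    ((fg n k).1 : ℝ) ≤ sigmaN n k ∧ ((fg n k).2 : ℝ) ≤ nuN n k := by
  obtain ⟨hG, hF⟩ := fg_bound hn k hk
  have hpl := kz_pow_log_le hn hk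
  obtain ⟨m, rfl⟩ : ∃ m, n = m + 3 := ⟨n - 3, by omega⟩
  rw [show m + 3 - 1 = m + 2 from rfl, show m + 3 - 2 = m + 1 from rfl] at hG hF
  set J := Nat.log (m + 3) k with hJ
  set α := Real.log (((m + 3 : ℕ) : ℝ) - 1) / Real.log ((m + 3 : ℕ) : ℝ) with hα
  have hcast : ((m + 3 : ℕ) : ℝ) - 1 = (m:ℝ) + 2 := by push_cast; ring
  have hGr : ((m:ℝ) + 1) * ((fg (m + 3) k).2 : ℝ) + ((m:ℝ) + 2) ≤ ((m:ℝ) + 2) ^ (J + 2) := by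
    exact_mod_cast hG
  have hFr : ((m:ℝ) + 1) * ((fg (m + 3) k).1 : ℝ) + ((m:ℝ) + 3)
      ≤ ((m:ℝ) + 2) ^ (J + 2) + ((m:ℝ) + 2) ^ (J + 1) := by
    exact_mod_cast hF
  have hplr : ((m:ℝ) + 2) ^ J ≤ (k : ℝ) ^ α := by
    rw [← hcast]
    exact hpl
  have hM0 : (0:ℝ) ≤ (m:ℝ) := Nat.cast_nonneg m
  have hkα : (0:ℝ) ≤ (k : ℝ) ^ α := Real.rpow_nonneg (Nat.cast_nonneg k) α
  have hc2 : (0:ℝ) < (m:ℝ) + 1 := by linarith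
  constructor
  · -- sigma
    rw [sigmaN, ← hα, hcast, show ((m + 3 : ℕ) : ℝ) - 2 = (m:ℝ) + 1 by push_cast; ring]
    rw [div_mul_eq_mul_div, le_div_iff₀ (by positivity : (0:ℝ) < ((m:ℝ) + 1) ^ 2)]
    have hstep : ((m:ℝ) + 1) * ((fg (m + 3) k).1 : ℝ) ≤ (((m:ℝ) + 2) ^ 2 + ((m:ℝ) + 2)) * (k : ℝ) ^ α := by
      have h1 : ((m:ℝ) + 2) ^ (J + 2) + ((m:ℝ) + 2) ^ (J + 1)
          = (((m:ℝ) + 2) ^ 2 + ((m:ℝ) + 2)) * ((m:ℝ) + 2) ^ J := by ring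
      have h2 : (((m:ℝ) + 2) ^ 2 + ((m:ℝ) + 2)) * ((m:ℝ) + 2) ^ J
          ≤ (((m:ℝ) + 2) ^ 2 + ((m:ℝ) + 2)) * (k : ℝ) ^ α :=
        mul_le_mul_of_nonneg_left hplr (by positivity)
      rw [h1] at hFr
      linarith
    nlinarith [mul_le_mul_of_nonneg_left hstep (show (0:ℝ) ≤ (m:ℝ) + 1 by linarith),
      mul_nonneg hkα (show (0:ℝ) ≤ (m:ℝ) + 2 by linarith)]
  · -- nu
    rw [nuN, ← hα, hcast, show ((m + 3 : ℕ) : ℝ) - 2 = (m:ℝ) + 1 by push_cast; ring]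
    rw [div_mul_eq_mul_div, le_div_iff₀ hc2]
    have h1 : ((m:ℝ) + 2) ^ (J + 2) = ((m:ℝ) + 2) ^ 2 * ((m:ℝ) + 2) ^ J := by ring
    have h2 : ((m:ℝ) + 2) ^ 2 * ((m:ℝ) + 2) ^ J ≤ ((m:ℝ) + 2) ^ 2 * (k : ℝ) ^ α :=
      mul_le_mul_of_nonneg_left hplr (by positivity)
    rw [h1] at hGr
    nlinarith

end Aux

/-- Kozyakin's quantitative converse to Gelfand's formula: for `n > 2`, `ρ(A) ≠ 0` and
`k ≥ 1`, `ρ(A) ≥ C_n^{−σ_n(k)/k} (‖A‖^n/‖A^n‖)^{−ν_n(k)/k} ‖A^k‖^{1/k}`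
with `C_n = n^{3n/2}`. -/
theorem stmt13 {n : ℕ} (hn : 2 < n) (A : Matrix (Fin n) (Fin n) ℂ)
    (hρ : specRad A ≠ 0) (k : ℕ) (hk : 1 ≤ k) :
    ((n : ℝ) ^ (3 * (n : ℝ) / 2)) ^ (-(sigmaN n k / k)) *
      (opNorm A ^ n / opNorm (A ^ n)) ^ (-(nuN n k / k)) *
      (opNorm (A ^ k)) ^ ((1 : ℝ) / k) ≤ specRad A := by
  haveI : NeZero n := ⟨by omega⟩
  have hr : 0 < specRad A := lt_of_le_of_ne (kz_specRad_nonneg A) (Ne.symm hρ)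
  set r := specRad A with hrdef
  set D := ((n : ℝ) * 2 ^ (n - 1)) with hD
  set R := opNorm A ^ n / opNorm (A ^ n) with hR
  set C := (n : ℝ) ^ (3 * (n : ℝ) / 2) with hC
  have hAn0 : 0 < opNorm (A ^ n) :=
    lt_of_lt_of_le (pow_pos hr n) (kz_specRad_pow_le A n (by omega))
  have hR1 : 1 ≤ R := (one_le_div hAn0).mpr (kz_opNorm_pow_le A n)
  have hR0 : 0 < R := lt_of_lt_of_le one_pos hR1
  have hn1R : (1:ℝ) ≤ (n:ℝ) := by exact_mod_cast (by omega : 1 ≤ n)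
  have hD1 : 1 ≤ D := by
    rw [hD]
    have h2 : (1:ℝ) ≤ 2 ^ (n - 1) := one_le_pow₀ one_le_two
    nlinarith
  have hD0 : 0 < D := lt_of_lt_of_le one_pos hD1
  have hDC : D ≤ C := by
    have e : n - 1 + 1 = n := by omega
    have h1 : (2:ℝ) ^ (n - 1) ≤ (n:ℝ) ^ (n - 1) :=
      pow_le_pow_left₀ (by norm_num) (by exact_mod_cast (by omega : 2 ≤ n)) _
    have h2 : (n:ℝ) * (n:ℝ) ^ (n - 1) = (n:ℝ) ^ (n - 1) * (n:ℝ) := mul_comm _ _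
    have h3 : ∀ x : ℝ, x ^ (n - 1) * x = x ^ n := by
      intro x
      conv_rhs => rw [← e]
      rw [pow_succ]
    calc D = (n:ℝ) * 2 ^ (n - 1) := hD
      _ ≤ (n:ℝ) * (n:ℝ) ^ (n - 1) := by nlinarith
      _ = (n:ℝ) ^ n := by rw [h2, h3]
      _ = (n:ℝ) ^ ((n : ℕ) : ℝ) := (Real.rpow_natCast _ _).symm
      _ ≤ C := Real.rpow_le_rpow_of_exponent_le hn1R (by
          push_cast
          linarith)
  have hC0 : 0 < C := lt_of_lt_of_le hD0 hDC
  obtain ⟨hfσ, hgν⟩ := kz_fg_le_real hn k hk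
  have hσ0 : 0 ≤ sigmaN n k := le_trans (Nat.cast_nonneg _) hfσ
  have hν0 : 0 ≤ nuN n k := le_trans (Nat.cast_nonneg _) hgν
  have hmaster := kz_master hn A hr k hk
  have hup : opNorm (A ^ k) ≤ C ^ sigmaN n k * R ^ nuN n k * r ^ k := by
    refine hmaster.trans ?_
    have h1 : D ^ (fg n k).1 ≤ C ^ sigmaN n k := by
      rw [← Real.rpow_natCast D]
      calc D ^ (((fg n k).1 : ℕ) : ℝ) ≤ D ^ sigmaN n k :=
          Real.rpow_le_rpow_of_exponent_le hD1 hfσ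
        _ ≤ C ^ sigmaN n k := Real.rpow_le_rpow hD0.le hDC hσ0
    have h2 : R ^ (fg n k).2 ≤ R ^ nuN n k := by
      rw [← Real.rpow_natCast R]
      exact Real.rpow_le_rpow_of_exponent_le hR1 hgν
    exact mul_le_mul (mul_le_mul h1 h2 (by positivity) (Real.rpow_nonneg hC0.le _))
      le_rfl (by positivity) (mul_nonneg (Real.rpow_nonneg hC0.le _) (Real.rpow_nonneg hR0.le _))
  set X := C ^ sigmaN n k * R ^ nuN n k with hX
  have hX0 : 0 < X := mul_pos (Real.rpow_pos_of_pos hC0 _) (Real.rpow_pos_of_pos hR0 _)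
  have hk0 : (k:ℝ) ≠ 0 := Nat.cast_ne_zero.mpr (by omega)
  have hik : (0:ℝ) ≤ 1/k := by positivity
  have h6 : opNorm (A ^ k) ^ ((1:ℝ)/k) ≤ X ^ ((1:ℝ)/k) * r := by
    have h7 := Real.rpow_le_rpow (norm_nonneg _) hup hik
    refine h7.trans ?_
    rw [Real.mul_rpow hX0.le (pow_nonneg hr.le k)]
    have h8 : (r ^ k) ^ ((1:ℝ)/k) = r := by
      rw [← Real.rpow_natCast r k, ← Real.rpow_mul hr.le, mul_one_div,
        div_self hk0, Real.rpow_one]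
    rw [h8]
  have hLHS : C ^ (-(sigmaN n k / k)) * R ^ (-(nuN n k / k)) = X ^ (-((1:ℝ)/k)) := by
    rw [hX, Real.mul_rpow (Real.rpow_nonneg hC0.le _) (Real.rpow_nonneg hR0.le _),
      ← Real.rpow_mul hC0.le, ← Real.rpow_mul hR0.le]
    congr 2 <;> ring
  calc C ^ (-(sigmaN n k / k)) * R ^ (-(nuN n k / k)) * opNorm (A ^ k) ^ ((1:ℝ)/k)
      = X ^ (-((1:ℝ)/k)) * opNorm (A ^ k) ^ ((1:ℝ)/k) := by rw [hLHS]
    _ ≤ X ^ (-((1:ℝ)/k)) * (X ^ ((1:ℝ)/k) * r) :=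
        mul_le_mul_of_nonneg_left h6 (Real.rpow_nonneg hX0.le _)
    _ = r := by
        rw [← mul_assoc, ← Real.rpow_add hX0, neg_add_cancel, Real.rpow_zero, one_mul]
end
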